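/- The Benjamin-Whitham coefficient e_BW(α) = [−4 + 8α² + 8cosh(2α) + 5cosh(4α) + 2α(−9coth(α) + 18α csch²(2α) − 2sinh(4α) + 3tanh(α))] / [(−1 + 8α² + cosh(4α) − 4α sinh(4α)) tanh(α)^{3/2}] tends to 1 as α → ∞. -/

import Mathlib

/-- The Benjamin-Whitham coefficient `e_BW(α)`. -/
noncomputable def eBW (α : ℝ) : ℝ :=
  (-4 + 8 * α ^ 2 + 8 * Real.cosh (2 * α) + 5 * Real.cosh (4 * α)
    + 2 * α * (-9 * (Real.cosh α / Real.sinh α)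
        + 18 * α * ((Real.sinh (2 * α))⁻¹) ^ 2
        - 2 * Real.sinh (4 * α) + 3 * Real.tanh α)) /
  ((-1 + 8 * α ^ 2 + Real.cosh (4 * α) - 4 * α * Real.sinh (4 * α))
    * Real.tanh α ^ ((3 : ℝ) / 2))

/-!
Since `-4α sinh 4α = -2α e^{4α} + 2α e^{-4α}`, both the numerator and the bracket in the
denominator are `-2α e^{4α} + O(e^{4α})`: all other terms are polynomials in `α`, `cosh` of at
most `4α`, or `α` times a function with a finite limit (built from `coth α → 1`,
`tanh α → 1`, `α csch² 2α → 0` and `e^{-4α} → 0`). Hence both are asymptotically equivalent to `-2α e^{4α}`, their ratio tends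
to `1`, and so does `tanh α ^ (3/2)`.
-/

open Real Filter Topology Asymptotics

theorem Real.tanh_eq_one_sub_two_div (x : ℝ) : tanh x = 1 - 2 / (exp (2 * x) + 1) := by
  have h : exp (2 * x) = exp x * exp x := by rw [two_mul, exp_add]
  rw [tanh_eq, h, exp_neg]
  field_simp
  ring

theorem Real.tendsto_tanh_atTop : Tendsto tanh atTop (𝓝 1) := by
  have h : Tendsto (fun x : ℝ => exp (2 * x) + 1) atTop atTop :=
    tendsto_atTop_add_const_right _ 1
      (tendsto_exp_atTop.comp (tendsto_id.const_mul_atTop two_pos))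
  simpa [← tanh_eq_one_sub_two_div] using (h.const_div_atTop 2).const_sub 1

theorem Real.tendsto_cosh_div_sinh_atTop : Tendsto (fun x => cosh x / sinh x) atTop (𝓝 1) := by
  simpa [tanh_eq_sinh_div_cosh] using tendsto_tanh_atTop.inv₀ one_ne_zero

theorem Real.tendsto_exp_neg_mul_atTop_nhds_zero {c : ℝ} (hc : 0 < c) :
    Tendsto (fun x => exp (-(c * x))) atTop (𝓝 0) :=
  tendsto_exp_neg_atTop_nhds_zero.comp (tendsto_id.const_mul_atTop hc)

theorem Real.cosh_le_exp_abs (x : ℝ) : cosh x ≤ exp |x| := by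
  rw [← cosh_abs, cosh_eq]
  have : exp (-|x|) ≤ exp |x| := exp_le_exp.2 (by linarith [abs_nonneg x])
  linarith

theorem tendsto_mul_inv_sinh_two_mul_sq_atTop :
    Tendsto (fun x => x * (sinh (2 * x))⁻¹ ^ 2) atTop (𝓝 0) := by
  refine tendsto_of_tendsto_of_tendsto_of_le_of_le' tendsto_const_nhds
    (tendsto_inv_atTop_zero.comp (tendsto_id.const_mul_atTop four_pos)) ?_ ?_
  · filter_upwards [eventually_ge_atTop 0] with x hx
    positivity
  · filter_upwards [eventually_gt_atTop 0] with x hx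
    -- `sinh y ≥ y` gives `x / sinh² (2x) ≤ x / (2x)² = 1 / (4x)`
    have hs : 2 * x ≤ sinh (2 * x) := self_le_sinh_iff.2 (by positivity)
    simp only [Function.comp, id]
    rw [inv_pow, ← div_eq_mul_inv, div_le_iff₀ (by positivity), inv_mul_eq_div,
      le_div_iff₀ (by positivity)]
    nlinarith

theorem cosh_mul_isBigO_exp {k c : ℝ} (hk : |k| ≤ c) :
    (fun x => cosh (k * x)) =O[atTop] fun x => exp (c * x) := by
  refine IsBigO.of_bound 1 ?_
  filter_upwards [eventually_ge_atTop 0] with x hx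
  rw [norm_of_nonneg (cosh_pos _).le, norm_of_nonneg (exp_pos _).le, one_mul]
  calc cosh (k * x) ≤ exp |k * x| := cosh_le_exp_abs _
    _ ≤ exp (c * x) := by
      rw [abs_mul, abs_of_nonneg hx]
      exact exp_le_exp.2 (mul_le_mul_of_nonneg_right hk hx)

theorem pow_mul_isBigO_exp_of_tendsto (k : ℕ) {c L : ℝ} (hc : 0 < c) {f : ℝ → ℝ}
    (hf : Tendsto f atTop (𝓝 L)) :
    (fun x => x ^ k * f x) =O[atTop] fun x => exp (c * x) :=
  ((isLittleO_pow_exp_pos_mul_atTop k hc).isBigO.mul (hf.isBigO_one ℝ)).congr_right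
    fun _ => mul_one _

theorem isLittleO_exp_mul_self (c : ℝ) :
    (fun x => exp (c * x)) =o[atTop] fun x => x * exp (c * x) := by
  simpa using (isLittleO_const_id_atTop (1 : ℝ)).mul_isBigO (isBigO_refl (fun x => exp (c * x)) _)

theorem isEquivalent_mul_self_mul_exp_add {a c : ℝ} (ha : a ≠ 0) {r : ℝ → ℝ}
    (hr : r =O[atTop] fun x => exp (c * x)) :
    (fun x => a * (x * exp (c * x)) + r x) ~[atTop] fun x => a * (x * exp (c * x)) :=
  IsEquivalent.refl.add_isLittleO
    (hr.trans_isLittleO ((isLittleO_exp_mul_self c).const_mul_right ha))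

theorem isBigO_const_exp_mul {c : ℝ} (hc : 0 < c) (a : ℝ) :
    (fun _ => a) =O[atTop] fun x => exp (c * x) := by
  simpa using pow_mul_isBigO_exp_of_tendsto 0 hc (tendsto_const_nhds (x := a))

theorem isBigO_const_mul_sq_exp_mul {c : ℝ} (hc : 0 < c) (a : ℝ) :
    (fun x => a * x ^ 2) =O[atTop] fun x => exp (c * x) :=
  (isLittleO_pow_exp_pos_mul_atTop 2 hc).isBigO.const_mul_left a

noncomputable def eBWNum (α : ℝ) : ℝ :=
  -4 + 8 * α ^ 2 + 8 * cosh (2 * α) + 5 * cosh (4 * α)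
    + 2 * α * (-9 * (cosh α / sinh α) + 18 * α * ((sinh (2 * α))⁻¹) ^ 2
      - 2 * sinh (4 * α) + 3 * tanh α)

noncomputable def eBWDen (α : ℝ) : ℝ :=
  -1 + 8 * α ^ 2 + cosh (4 * α) - 4 * α * sinh (4 * α)

theorem eBW_eq (α : ℝ) : eBW α = eBWNum α / (eBWDen α * tanh α ^ ((3 : ℝ) / 2)) := rfl

theorem eBWNum_isEquivalent : eBWNum ~[atTop] fun α => -2 * (α * exp (4 * α)) := by
  have hB : Tendsto (fun α => 2 * (-9 * (cosh α / sinh α) + 18 * (α * (sinh (2 * α))⁻¹ ^ 2)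
      + 3 * tanh α + exp (-(4 * α)))) atTop (𝓝 (2 * (-9 * 1 + 18 * 0 + 3 * 1 + 0))) :=
    ((((tendsto_cosh_div_sinh_atTop.const_mul _).add
      (tendsto_mul_inv_sinh_two_mul_sq_atTop.const_mul _)).add
      (tendsto_tanh_atTop.const_mul _)).add
      (tendsto_exp_neg_mul_atTop_nhds_zero four_pos)).const_mul 2
  have hR : (fun α => -4 + 8 * α ^ 2 + 8 * cosh (2 * α) + 5 * cosh (4 * α)
      + α * (2 * (-9 * (cosh α / sinh α) + 18 * (α * (sinh (2 * α))⁻¹ ^ 2)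
        + 3 * tanh α + exp (-(4 * α))))) =O[atTop] fun α => exp (4 * α) :=
    ((((isBigO_const_exp_mul four_pos _).add (isBigO_const_mul_sq_exp_mul four_pos _)).add
      ((cosh_mul_isBigO_exp (by norm_num)).const_mul_left 8)).add
      ((cosh_mul_isBigO_exp (by norm_num)).const_mul_left 5)).add
      (by simpa only [pow_one] using pow_mul_isBigO_exp_of_tendsto 1 four_pos hB)
  refine (isEquivalent_mul_self_mul_exp_add (by norm_num) hR).congr_left
    (Eventually.of_forall fun α => ?_)
  simp only [eBWNum, sinh_eq (4 * α)]
  ring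

theorem eBWDen_isEquivalent : eBWDen ~[atTop] fun α => -2 * (α * exp (4 * α)) := by
  have hR : (fun α => -1 + 8 * α ^ 2 + cosh (4 * α) + α * (2 * exp (-(4 * α))))
      =O[atTop] fun α => exp (4 * α) := by
    have hE := (tendsto_exp_neg_mul_atTop_nhds_zero four_pos).const_mul 2
    exact (((isBigO_const_exp_mul four_pos _).add (isBigO_const_mul_sq_exp_mul four_pos _)).add
      (cosh_mul_isBigO_exp (by norm_num))).add
      (by simpa only [pow_one] using pow_mul_isBigO_exp_of_tendsto 1 four_pos hE)
  refine (isEquivalent_mul_self_mul_exp_add (by norm_num) hR).congr_left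
    (Eventually.of_forall fun α => ?_)
  simp only [eBWDen, sinh_eq (4 * α)]
  ring

/-- The Benjamin-Whitham coefficient `e_BW(α)` tends to `1` as `α → ∞`. -/
theorem eBW_tendsto_one :
    Filter.Tendsto eBW Filter.atTop (nhds 1) := by
  have hneg : ∀ᶠ α : ℝ in atTop, -2 * (α * exp (4 * α)) < 0 := by
    filter_upwards [eventually_gt_atTop 0] with α hα
    nlinarith [mul_pos hα (exp_pos (4 * α))]
  have hratio : Tendsto (eBWNum / eBWDen) atTop (𝓝 1) :=
    (isEquivalent_iff_tendsto_one ((eBWDen_isEquivalent.eventually_neg hneg).mono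
      fun _ h => h.ne)).1 (eBWNum_isEquivalent.trans eBWDen_isEquivalent.symm)
  have htanh : Tendsto (fun α => tanh α ^ ((3 : ℝ) / 2)) atTop (𝓝 1) := by
    simpa using tendsto_tanh_atTop.rpow_const (p := (3 : ℝ) / 2) (Or.inl one_ne_zero)
  have hlim := hratio.div htanh one_ne_zero
  rw [div_one] at hlim
  exact hlim.congr fun α => by rw [eBW_eq, div_mul_eq_div_div, Pi.div_apply, Pi.div_apply]
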